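/- Fix s ≥ 0 and a sign σ ∈ {+1, −1}. There exist M₀ = M₀(s) and, for each M ≥ M₀, a constant C > 0 such that the kernel K¹_ξ(η,(θ,λ)) := (⟨ξ² + η²⟩^{s/2} / ⟨ξ² + θ²⟩^{s/2}) · (|η|/|ξ|) · ⟨(θ² + σ η²)/ξ⟩^{−M} · 1_{{|λ − ξ⁵ + θ²/ξ| ≤ 1}} satisfies, uniformly in ξ ≠ 0: ∫_ℝ K¹_ξ(η,(θ,λ)) dη ≤ C for all θ, λ, and ∫_{ℝ²} K¹_ξ(η,(θ,λ)) dθ dλ ≤ C for all η. Consequently the integral operator with kernel K¹_ξ is bounded on L² uniformly in ξ. -/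

import Mathlib

open MeasureTheory
open scoped ENNReal

/-- Japanese bracket `⟨x⟩ = (1 + x²)^{1/2}`. -/
noncomputable def jap (x : ℝ) : ℝ := Real.sqrt (1 + x ^ 2)

/-- The kernel `K¹_ξ(η,(θ,λ))` from the Kato smoothing estimate for the Duhamel term. -/
noncomputable def K1ker (s M σ ξ η θ lam : ℝ) : ℝ :=
  (jap (ξ ^ 2 + η ^ 2) ^ (s/2) / jap (ξ ^ 2 + θ ^ 2) ^ (s/2)) * (|η| / |ξ|) *
    jap ((θ ^ 2 + σ * η ^ 2) / ξ) ^ (-M) *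
    (if |lam - ξ ^ 5 + θ ^ 2 / ξ| ≤ 1 then 1 else 0)

/-!
Write `u = (θ² + σ η²)/ξ`. Since `|η² - θ²| ≤ |θ² + σ η²| = |u| |ξ|` for either sign, Peetre's
inequality gives `⟨ξ² + η²⟩ ≤ √2 ⟨ξ² + θ²⟩ ⟨u⟩`, so for `M ≥ s/2 + 2` the kernel is at most
`√2^{s/2} (|η|/|ξ|) ⟨u⟩⁻²` times the `λ`-indicator. In either variable the sublevel set
`{|u| ≤ t}` lies in an annulus `{x : |x² - y²| ≤ t |ξ|}`, of width `O(t |ξ| / √(y² + t |ξ|))`,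
on which the weight `|η|/|ξ|` integrates to `O(t)`. Summing over the dyadic shells
`|u| ~ 2^k` bounds both Schur integrals (the `λ`-indicator only contributes its length 2), and
Schur's test gives the `L²` bound.
-/

section Schur

variable {α β : Type*} [MeasurableSpace α] [MeasurableSpace β]

theorem sq_lintegral_mul_le {μ : Measure α} {K F : α → ℝ≥0∞} (hK : AEMeasurable K μ)
    (hF : AEMeasurable F μ) :
    (∫⁻ x, K x * F x ∂μ) ^ 2 ≤ (∫⁻ x, K x ∂μ) * ∫⁻ x, K x * F x ^ 2 ∂μ := by
  have hsplit : ∀ x, K x ^ (1 / 2 : ℝ) * (K x * F x ^ 2) ^ (1 / 2 : ℝ) = K x * F x := by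
    intro x
    rw [ENNReal.mul_rpow_of_nonneg _ _ (by norm_num), ← mul_assoc,
      ← ENNReal.rpow_add_of_nonneg _ _ (by norm_num) (by norm_num), ← ENNReal.rpow_natCast,
      ← ENNReal.rpow_mul]
    norm_num
  have hholder := ENNReal.lintegral_mul_norm_pow_le hK (hK.mul (hF.pow_const 2))
    (p := 1 / 2) (q := 1 / 2) (by norm_num) (by norm_num) (by norm_num)
  simp only [Pi.mul_apply, hsplit] at hholder
  calc (∫⁻ x, K x * F x ∂μ) ^ 2
      ≤ ((∫⁻ x, K x ∂μ) ^ (1 / 2 : ℝ) * (∫⁻ x, K x * F x ^ 2 ∂μ) ^ (1 / 2 : ℝ)) ^ 2 := by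
        gcongr
    _ = (∫⁻ x, K x ∂μ) * ∫⁻ x, K x * F x ^ 2 ∂μ := by
        rw [mul_pow, ← ENNReal.rpow_natCast, ← ENNReal.rpow_natCast, ← ENNReal.rpow_mul,
          ← ENNReal.rpow_mul]
        norm_num

variable {μ : Measure α} {ν : Measure β} [SFinite μ] [SFinite ν]

-- Schur's test.
theorem lintegral_sq_lintegral_mul_le {K : α → β → ℝ≥0∞} (hK : Measurable (Function.uncurry K))
    {F : β → ℝ≥0∞} (hF : AEMeasurable F ν) {A : ℝ≥0∞} (hA : A ≠ ∞)
    (hrow : ∀ x, ∫⁻ y, K x y ∂ν ≤ A) (hcol : ∀ y, ∫⁻ x, K x y ∂μ ≤ A) :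
    ∫⁻ x, (∫⁻ y, K x y * F y ∂ν) ^ 2 ∂μ ≤ A ^ 2 * ∫⁻ y, F y ^ 2 ∂ν := by
  have hKF : AEMeasurable (Function.uncurry fun x y => K x y * F y ^ 2) (μ.prod ν) :=
    hK.aemeasurable.mul ((hF.pow_const 2).comp_quasiMeasurePreserving
      Measure.quasiMeasurePreserving_snd)
  calc ∫⁻ x, (∫⁻ y, K x y * F y ∂ν) ^ 2 ∂μ
      ≤ ∫⁻ x, A * ∫⁻ y, K x y * F y ^ 2 ∂ν ∂μ := lintegral_mono fun x =>
        (sq_lintegral_mul_le hK.of_uncurry_left.aemeasurable hF).trans (by gcongr; exact hrow x)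
    _ = A * ∫⁻ y, (∫⁻ x, K x y ∂μ) * F y ^ 2 ∂ν := by
        rw [lintegral_const_mul' _ _ hA, lintegral_lintegral_swap hKF]
        simp_rw [lintegral_mul_const _ hK.of_uncurry_right]
    _ ≤ A * ∫⁻ y, A * F y ^ 2 ∂ν := by gcongr with y; exact hcol y
    _ = A ^ 2 * ∫⁻ y, F y ^ 2 ∂ν := by rw [lintegral_const_mul' _ _ hA, ← mul_assoc, sq]

theorem eLpNorm_integral_mul_le {k : α → β → ℝ} (hk : Measurable (Function.uncurry k))
    (hk0 : ∀ x y, 0 ≤ k x y) {C : ℝ}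
    (hrow : ∀ x, ∫⁻ y, ENNReal.ofReal (k x y) ∂ν ≤ ENNReal.ofReal C)
    (hcol : ∀ y, ∫⁻ x, ENNReal.ofReal (k x y) ∂μ ≤ ENNReal.ofReal C)
    {f : β → ℝ} (hf : AEStronglyMeasurable f ν) :
    eLpNorm (fun x => ∫ y, k x y * f y ∂ν) 2 μ ≤ ENNReal.ofReal C * eLpNorm f 2 ν := by
  have hpt : ∀ x, ‖∫ y, k x y * f y ∂ν‖ₑ ≤ ∫⁻ y, ENNReal.ofReal (k x y) * ‖f y‖ₑ ∂ν := fun x =>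
    (enorm_integral_le_lintegral_enorm _).trans_eq <| lintegral_congr fun y => by
      rw [enorm_mul, Real.enorm_of_nonneg (hk0 x y)]
  have hsq := lintegral_sq_lintegral_mul_le (K := fun x y => ENNReal.ofReal (k x y))
    (ENNReal.measurable_ofReal.comp hk) hf.enorm ENNReal.ofReal_ne_top hrow hcol
  rw [eLpNorm_eq_lintegral_rpow_enorm_toReal two_ne_zero ENNReal.ofNat_ne_top,
    eLpNorm_eq_lintegral_rpow_enorm_toReal two_ne_zero ENNReal.ofNat_ne_top]
  simp only [ENNReal.toReal_ofNat, ENNReal.rpow_ofNat]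
  calc (∫⁻ x, ‖∫ y, k x y * f y ∂ν‖ₑ ^ 2 ∂μ) ^ (1 / 2 : ℝ)
      ≤ (ENNReal.ofReal C ^ 2 * ∫⁻ y, ‖f y‖ₑ ^ 2 ∂ν) ^ (1 / 2 : ℝ) := by
        gcongr
        exact (lintegral_mono fun x => by gcongr; exact hpt x).trans hsq
    _ = ENNReal.ofReal C * (∫⁻ y, ‖f y‖ₑ ^ 2 ∂ν) ^ (1 / 2 : ℝ) := by
        rw [ENNReal.mul_rpow_of_nonneg _ _ (by norm_num), ← ENNReal.rpow_natCast,
          ← ENNReal.rpow_mul]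
        norm_num

end Schur

theorem lintegral_ofReal_mul_inv_one_add_sq_le {α : Type*} [MeasurableSpace α] {μ : Measure α}
    {v w : α → ℝ} (hv : Measurable v) (hw : Measurable w) {B : ℝ≥0∞}
    (hB : ∀ t : ℝ, 1 ≤ t → ∫⁻ x in {x | |v x| ≤ t}, ENNReal.ofReal (w x) ∂μ ≤
      B * ENNReal.ofReal t) :
    ∫⁻ x, ENNReal.ofReal (w x * (1 + v x ^ 2)⁻¹) ∂μ ≤ 4 * B := by
  set S : ℕ → Set α := fun k => {x | |v x| ≤ 2 ^ (k + 1)}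
  have hS : ∀ k, MeasurableSet (S k) := fun k => measurableSet_le hv.abs measurable_const
  -- If `4 ^ k ≤ 1 + v x ^ 2 < 4 ^ (k + 1)`, the `k`-th term alone dominates the integrand.
  have hpt : ∀ x, ENNReal.ofReal (w x * (1 + v x ^ 2)⁻¹) ≤
      ∑' k, (S k).indicator (fun x => ENNReal.ofReal (w x) * ENNReal.ofReal (4 ^ k)⁻¹) x := by
    intro x
    obtain ⟨k, hk, hk'⟩ :=
      exists_nat_pow_near (by nlinarith [sq_nonneg (v x)] : 1 ≤ 1 + v x ^ 2)
        (by norm_num : (1 : ℝ) < 4)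
    have hx : x ∈ S k := by
      have h4 : (4 : ℝ) ^ (k + 1) = (2 ^ (k + 1)) ^ 2 := by
        rw [← pow_mul, mul_comm, pow_mul]; norm_num
      exact show |v x| ≤ 2 ^ (k + 1) from
        (abs_lt_of_sq_lt_sq (by linarith) (by positivity)).le
    refine le_trans ?_ (ENNReal.le_tsum k)
    rw [Set.indicator_of_mem hx, ENNReal.ofReal_mul' (by positivity)]
    gcongr
  calc ∫⁻ x, ENNReal.ofReal (w x * (1 + v x ^ 2)⁻¹) ∂μ
      ≤ ∫⁻ x, ∑' k, (S k).indicator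
          (fun x => ENNReal.ofReal (w x) * ENNReal.ofReal (4 ^ k)⁻¹) x ∂μ := lintegral_mono hpt
    _ = ∑' k, (∫⁻ x in S k, ENNReal.ofReal (w x) ∂μ) * ENNReal.ofReal (4 ^ k)⁻¹ := by
        rw [lintegral_tsum fun k =>
          ((hw.ennreal_ofReal.mul_const _).indicator (hS k)).aemeasurable]
        simp_rw [lintegral_indicator (hS _), lintegral_mul_const _ hw.ennreal_ofReal]
    _ ≤ ∑' k : ℕ, B * ENNReal.ofReal (2 * (1 / 2) ^ k) := by
        refine ENNReal.tsum_le_tsum fun k => ?_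
        calc (∫⁻ x in S k, ENNReal.ofReal (w x) ∂μ) * ENNReal.ofReal (4 ^ k)⁻¹
            ≤ B * ENNReal.ofReal (2 ^ (k + 1)) * ENNReal.ofReal (4 ^ k)⁻¹ := by
              gcongr; exact hB _ (one_le_pow₀ (by norm_num))
          _ = B * ENNReal.ofReal (2 * (1 / 2) ^ k) := by
              rw [mul_assoc, ← ENNReal.ofReal_mul (by positivity)]
              congr 2
              rw [show (4 : ℝ) ^ k = 2 ^ k * 2 ^ k by rw [← mul_pow]; norm_num, one_div_pow,
                pow_succ]
              field_simp
    _ = 4 * B := by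
        rw [ENNReal.tsum_mul_left, ← ENNReal.ofReal_tsum_of_nonneg (fun k => by positivity)
          (summable_geometric_two.mul_left 2), tsum_mul_left, tsum_geometric_two, mul_comm]
        norm_num

theorem volume_setOf_abs_sq_sub_sq_le (y : ℝ) {r : ℝ} (hr : 0 ≤ r) :
    volume {x : ℝ | |x ^ 2 - y ^ 2| ≤ r} ≤ ENNReal.ofReal (2 * (√(y ^ 2 + r) - √(y ^ 2 - r))) := by
  set a := √(y ^ 2 - r)
  set b := √(y ^ 2 + r)
  have hab : a ≤ b := Real.sqrt_le_sqrt (by linarith)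
  have hsub : {x : ℝ | |x ^ 2 - y ^ 2| ≤ r} ⊆ Set.Icc (-b) (-a) ∪ Set.Icc a b := by
    intro x (hx : |x ^ 2 - y ^ 2| ≤ r)
    obtain ⟨hlo, hhi⟩ := abs_le.1 hx
    have hb : |x| ≤ b := Real.abs_le_sqrt (by linarith)
    have ha : a ≤ |x| := by
      rw [← Real.sqrt_sq_eq_abs]; exact Real.sqrt_le_sqrt (by linarith)
    rcases le_total 0 x with h | h
    · rw [abs_of_nonneg h] at ha hb; exact Or.inr ⟨ha, hb⟩
    · rw [abs_of_nonpos h] at ha hb; exact Or.inl ⟨by linarith, by linarith⟩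
  calc volume {x : ℝ | |x ^ 2 - y ^ 2| ≤ r}
      ≤ volume (Set.Icc (-b) (-a)) + volume (Set.Icc a b) :=
        (measure_mono hsub).trans (measure_union_le _ _)
    _ = ENNReal.ofReal (2 * (b - a)) := by
        rw [Real.volume_Icc, Real.volume_Icc, ← ENNReal.ofReal_add (by linarith) (by linarith)]
        congr 1; ring

theorem setLIntegral_setOf_abs_sq_sub_sq_le {y r c : ℝ} (hr : 0 ≤ r) (hc : 0 ≤ c)
    {f : ℝ → ℝ≥0∞} (hf : ∀ x, |x ^ 2 - y ^ 2| ≤ r → f x ≤ ENNReal.ofReal (c * √(y ^ 2 + r))) :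
    ∫⁻ x in {x | |x ^ 2 - y ^ 2| ≤ r}, f x ≤ ENNReal.ofReal (4 * c * r) := by
  set a := √(y ^ 2 - r)
  set b := √(y ^ 2 + r)
  have hb2 : b ^ 2 = y ^ 2 + r := Real.sq_sqrt (by positivity)
  have ha2 : y ^ 2 - r ≤ a ^ 2 := by
    rcases le_total 0 (y ^ 2 - r) with h | h
    · exact (Real.sq_sqrt h).ge
    · exact h.trans (sq_nonneg a)
  have hab : a ≤ b := Real.sqrt_le_sqrt (by linarith)
  have ha : 0 ≤ a := Real.sqrt_nonneg _
  calc ∫⁻ x in {x | |x ^ 2 - y ^ 2| ≤ r}, f x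
      ≤ ∫⁻ _ in {x | |x ^ 2 - y ^ 2| ≤ r}, ENNReal.ofReal (c * b) :=
        setLIntegral_mono' (measurableSet_le (by fun_prop) measurable_const) hf
    _ ≤ ENNReal.ofReal (c * b) * ENNReal.ofReal (2 * (b - a)) := by
        rw [setLIntegral_const]; gcongr; exact volume_setOf_abs_sq_sub_sq_le y hr
    _ ≤ ENNReal.ofReal (4 * c * r) := by
        rw [← ENNReal.ofReal_mul (by positivity)]
        gcongr ENNReal.ofReal ?_
        -- `b (b - a) ≤ b ^ 2 - a ^ 2 ≤ 2 r`
        nlinarith [mul_nonneg hc (mul_nonneg ha (sub_nonneg.2 hab))]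

theorem one_le_jap (x : ℝ) : 1 ≤ jap x :=
  Real.one_le_sqrt.2 (by nlinarith [sq_nonneg x])

theorem jap_pos (x : ℝ) : 0 < jap x := zero_lt_one.trans_le (one_le_jap x)

theorem jap_sq (x : ℝ) : jap x ^ 2 = 1 + x ^ 2 := Real.sq_sqrt (by positivity)

theorem jap_le_sqrt_two_mul_jap_mul_jap {X Y u : ℝ} (h : |Y| ≤ |X| + |u| * jap X) :
    jap Y ≤ √2 * jap X * jap u := by
  rw [jap, jap, jap, ← Real.sqrt_mul (by norm_num), ← Real.sqrt_mul (by positivity)]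
  apply Real.sqrt_le_sqrt
  have hY : Y ^ 2 ≤ (|X| + |u| * jap X) ^ 2 := by
    rw [← sq_abs Y]; exact pow_le_pow_left₀ (abs_nonneg Y) h 2
  nlinarith [sq_nonneg (|X| - |u| * jap X), jap_sq X, sq_abs X, sq_abs u]

theorem abs_sq_sub_sq_le {σ : ℝ} (hσ : σ = 1 ∨ σ = -1) (x y : ℝ) :
    |x ^ 2 - y ^ 2| ≤ |x ^ 2 + σ * y ^ 2| := by
  rcases hσ with rfl | rfl
  · rw [abs_of_nonneg (by positivity : 0 ≤ x ^ 2 + 1 * y ^ 2)]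
    exact abs_le.2 ⟨by nlinarith [sq_nonneg x], by nlinarith [sq_nonneg y]⟩
  · rw [neg_one_mul, ← sub_eq_add_neg]

theorem jap_rpow_div_jap_rpow_le {s σ ξ : ℝ} (hs : 0 ≤ s) (hσ : σ = 1 ∨ σ = -1) (hξ : ξ ≠ 0)
    (η θ : ℝ) :
    jap (ξ ^ 2 + η ^ 2) ^ (s / 2) / jap (ξ ^ 2 + θ ^ 2) ^ (s / 2) ≤
      √2 ^ (s / 2) * jap ((θ ^ 2 + σ * η ^ 2) / ξ) ^ (s / 2) := by
  set u := (θ ^ 2 + σ * η ^ 2) / ξ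
  have hξ_le : |ξ| ≤ jap (ξ ^ 2 + θ ^ 2) :=
    Real.le_sqrt_of_sq_le (by nlinarith [sq_abs ξ, sq_nonneg (ξ ^ 2 - 1), sq_nonneg θ])
  have hη : η ^ 2 ≤ θ ^ 2 + |u| * jap (ξ ^ 2 + θ ^ 2) := calc
    η ^ 2 ≤ θ ^ 2 + |θ ^ 2 + σ * η ^ 2| := by
      linarith [le_abs_self (η ^ 2 - θ ^ 2), abs_sub_comm (η ^ 2) (θ ^ 2),
        abs_sq_sub_sq_le hσ θ η]
    _ = θ ^ 2 + |u| * |ξ| := by rw [← abs_mul, div_mul_cancel₀ _ hξ]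
    _ ≤ θ ^ 2 + |u| * jap (ξ ^ 2 + θ ^ 2) := by gcongr
  have hbracket : jap (ξ ^ 2 + η ^ 2) ≤ √2 * jap (ξ ^ 2 + θ ^ 2) * jap u :=
    jap_le_sqrt_two_mul_jap_mul_jap (by
      rw [abs_of_nonneg (by positivity), abs_of_nonneg (by positivity)]; linarith)
  rw [← Real.div_rpow (jap_pos _).le (jap_pos _).le, ← Real.mul_rpow (by positivity)
    (jap_pos u).le]
  gcongr
  · exact div_nonneg (jap_pos _).le (jap_pos _).le
  · rw [div_le_iff₀ (jap_pos _)]; linarith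

theorem abs_sq_sub_sq_le_of_abs_div_le {σ ξ t x y : ℝ} (hσ : σ = 1 ∨ σ = -1) (hξ : ξ ≠ 0)
    (h : |(x ^ 2 + σ * y ^ 2) / ξ| ≤ t) : |x ^ 2 - y ^ 2| ≤ t * |ξ| := by
  rw [abs_div, div_le_iff₀ (abs_pos.2 hξ)] at h
  exact (abs_sq_sub_sq_le hσ x y).trans h

theorem setLIntegral_sublevel_eta_le {σ ξ t : ℝ} (hσ : σ = 1 ∨ σ = -1) (hξ : ξ ≠ 0)
    (ht : 0 ≤ t) (θ : ℝ) :
    ∫⁻ η in {η | |(θ ^ 2 + σ * η ^ 2) / ξ| ≤ t}, ENNReal.ofReal (|η| / |ξ|) ≤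
      4 * ENNReal.ofReal t := by
  calc ∫⁻ η in {η | |(θ ^ 2 + σ * η ^ 2) / ξ| ≤ t}, ENNReal.ofReal (|η| / |ξ|)
      ≤ ∫⁻ η in {η | |η ^ 2 - θ ^ 2| ≤ t * |ξ|}, ENNReal.ofReal (|η| / |ξ|) :=
        lintegral_mono_set fun η hη =>
          (abs_sub_comm _ _).trans_le (abs_sq_sub_sq_le_of_abs_div_le hσ hξ hη)
    _ ≤ ENNReal.ofReal (4 * |ξ|⁻¹ * (t * |ξ|)) :=
        setLIntegral_setOf_abs_sq_sub_sq_le (by positivity) (by positivity) fun η hη => by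
          rw [div_eq_inv_mul]
          gcongr
          exact Real.abs_le_sqrt (by linarith [(abs_le.1 hη).2])
    _ = 4 * ENNReal.ofReal t := by
        rw [← ENNReal.ofReal_ofNat 4, ← ENNReal.ofReal_mul (by norm_num)]
        field_simp

theorem setLIntegral_sublevel_theta_le {σ ξ t : ℝ} (hσ : σ = 1 ∨ σ = -1) (hξ : ξ ≠ 0)
    (ht : 0 ≤ t) (η : ℝ) :
    ∫⁻ _ in {θ | |(θ ^ 2 + σ * η ^ 2) / ξ| ≤ t}, ENNReal.ofReal (|η| / |ξ|) ≤
      4 * ENNReal.ofReal t := by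
  calc ∫⁻ _ in {θ | |(θ ^ 2 + σ * η ^ 2) / ξ| ≤ t}, ENNReal.ofReal (|η| / |ξ|)
      ≤ ∫⁻ _ in {θ | |θ ^ 2 - η ^ 2| ≤ t * |ξ|}, ENNReal.ofReal (|η| / |ξ|) :=
        lintegral_mono_set fun θ hθ => abs_sq_sub_sq_le_of_abs_div_le hσ hξ hθ
    _ ≤ ENNReal.ofReal (4 * |ξ|⁻¹ * (t * |ξ|)) :=
        setLIntegral_setOf_abs_sq_sub_sq_le (by positivity) (by positivity) fun _ _ => by
          rw [div_eq_inv_mul]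
          gcongr
          exact Real.abs_le_sqrt (by nlinarith [abs_nonneg ξ])
    _ = 4 * ENNReal.ofReal t := by
        rw [← ENNReal.ofReal_ofNat 4, ← ENNReal.ofReal_mul (by norm_num)]
        field_simp

theorem K1ker_nonneg (s M σ ξ η θ lam : ℝ) : 0 ≤ K1ker s M σ ξ η θ lam := by
  unfold K1ker jap
  positivity

theorem measurable_K1ker (s M σ ξ : ℝ) :
    Measurable fun q : ℝ × ℝ × ℝ => K1ker s M σ ξ q.1 q.2.1 q.2.2 := by
  unfold K1ker jap
  exact Measurable.mul (by fun_prop)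
    (Measurable.ite (measurableSet_le (by fun_prop) measurable_const) measurable_const
      measurable_const)

theorem lintegral_ofReal_mul_ite_abs_sub_le_one (a c : ℝ) :
    ∫⁻ lam, ENNReal.ofReal (a * if |lam - c| ≤ 1 then 1 else 0) = 2 * ENNReal.ofReal a := by
  have hind : ∀ lam, ENNReal.ofReal (a * if |lam - c| ≤ 1 then 1 else 0) =
      (Metric.closedBall c 1).indicator (fun _ => ENNReal.ofReal a) lam := by
    intro lam
    simp only [Set.indicator, Metric.mem_closedBall, Real.dist_eq]
    split_ifs <;> simp
  simp_rw [hind, lintegral_indicator_const measurableSet_closedBall, Real.volume_closedBall]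
  norm_num [mul_comm]

section Kernel

variable {s M σ ξ : ℝ}

theorem K1ker_le (hs : 0 ≤ s) (hσ : σ = 1 ∨ σ = -1) (hξ : ξ ≠ 0)
    (hM : s / 2 + 2 ≤ M) (η θ lam : ℝ) :
    K1ker s M σ ξ η θ lam ≤ √2 ^ (s / 2) * (|η| / |ξ| * (1 + ((θ ^ 2 + σ * η ^ 2) / ξ) ^ 2)⁻¹) *
      (if |lam - (ξ ^ 5 - θ ^ 2 / ξ)| ≤ 1 then 1 else 0) := by
  rw [K1ker, show lam - ξ ^ 5 + θ ^ 2 / ξ = lam - (ξ ^ 5 - θ ^ 2 / ξ) by ring]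
  gcongr ?_ * _
  set u := (θ ^ 2 + σ * η ^ 2) / ξ
  calc jap (ξ ^ 2 + η ^ 2) ^ (s / 2) / jap (ξ ^ 2 + θ ^ 2) ^ (s / 2) * (|η| / |ξ|) * jap u ^ (-M)
      ≤ √2 ^ (s / 2) * jap u ^ (s / 2) * (|η| / |ξ|) * jap u ^ (-M) := by
        gcongr
        · exact Real.rpow_nonneg (jap_pos u).le _
        · exact jap_rpow_div_jap_rpow_le hs hσ hξ η θ
    _ = √2 ^ (s / 2) * (|η| / |ξ| * jap u ^ (s / 2 - M)) := by
        rw [sub_eq_add_neg, Real.rpow_add (jap_pos u)]; ring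
    _ ≤ √2 ^ (s / 2) * (|η| / |ξ| * jap u ^ (-2 : ℝ)) := by
        gcongr
        · exact one_le_jap u
        · linarith
    _ = √2 ^ (s / 2) * (|η| / |ξ| * (1 + u ^ 2)⁻¹) := by
        rw [Real.rpow_neg (jap_pos u).le, Real.rpow_two, jap_sq]

theorem lintegral_K1ker_le (hs : 0 ≤ s) (hσ : σ = 1 ∨ σ = -1) (hξ : ξ ≠ 0)
    (hM : s / 2 + 2 ≤ M) (θ lam : ℝ) :
    ∫⁻ η, ENNReal.ofReal (K1ker s M σ ξ η θ lam) ≤ ENNReal.ofReal (√2 ^ (s / 2) * 16) := by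
  calc ∫⁻ η, ENNReal.ofReal (K1ker s M σ ξ η θ lam)
      ≤ ∫⁻ η, ENNReal.ofReal (√2 ^ (s / 2)) *
          ENNReal.ofReal (|η| / |ξ| * (1 + ((θ ^ 2 + σ * η ^ 2) / ξ) ^ 2)⁻¹) :=
        lintegral_mono fun η => by
          rw [← ENNReal.ofReal_mul (by positivity)]
          refine ENNReal.ofReal_le_ofReal ((K1ker_le hs hσ hξ hM η θ lam).trans ?_)
          refine mul_le_of_le_one_right (by positivity) ?_
          split_ifs <;> norm_num
    _ ≤ ENNReal.ofReal (√2 ^ (s / 2)) * (4 * 4) := by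
        rw [lintegral_const_mul' _ _ ENNReal.ofReal_ne_top]
        gcongr
        exact lintegral_ofReal_mul_inv_one_add_sq_le (by fun_prop) (by fun_prop)
          fun t ht => setLIntegral_sublevel_eta_le hσ hξ (by linarith) θ
    _ = ENNReal.ofReal (√2 ^ (s / 2) * 16) := by
        rw [ENNReal.ofReal_mul (by positivity)]; norm_num

theorem lintegral_lintegral_K1ker_le (hs : 0 ≤ s) (hσ : σ = 1 ∨ σ = -1) (hξ : ξ ≠ 0)
    (hM : s / 2 + 2 ≤ M) (η : ℝ) :
    ∫⁻ θ, ∫⁻ lam, ENNReal.ofReal (K1ker s M σ ξ η θ lam) ≤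
      ENNReal.ofReal (√2 ^ (s / 2) * 32) := by
  calc ∫⁻ θ, ∫⁻ lam, ENNReal.ofReal (K1ker s M σ ξ η θ lam)
      ≤ ∫⁻ θ, 2 * ENNReal.ofReal (√2 ^ (s / 2) *
          (|η| / |ξ| * (1 + ((θ ^ 2 + σ * η ^ 2) / ξ) ^ 2)⁻¹)) :=
        lintegral_mono fun θ => by
          rw [← lintegral_ofReal_mul_ite_abs_sub_le_one _ (ξ ^ 5 - θ ^ 2 / ξ)]
          exact lintegral_mono fun lam => ENNReal.ofReal_le_ofReal (K1ker_le hs hσ hξ hM η θ lam)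
    _ = 2 * ENNReal.ofReal (√2 ^ (s / 2)) * ∫⁻ θ,
          ENNReal.ofReal (|η| / |ξ| * (1 + ((θ ^ 2 + σ * η ^ 2) / ξ) ^ 2)⁻¹) := by
        simp_rw [ENNReal.ofReal_mul (by positivity : 0 ≤ √2 ^ (s / 2)), ← mul_assoc]
        exact lintegral_const_mul' _ _ (by finiteness)
    _ ≤ 2 * ENNReal.ofReal (√2 ^ (s / 2)) * (4 * 4) := by
        gcongr
        exact lintegral_ofReal_mul_inv_one_add_sq_le (w := fun _ => |η| / |ξ|) (by fun_prop)
          measurable_const fun t ht => setLIntegral_sublevel_theta_le hσ hξ (by linarith) η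
    _ = ENNReal.ofReal (√2 ^ (s / 2) * 32) := by
        rw [ENNReal.ofReal_mul (by positivity)]; norm_num; ring

end Kernel

/-- For `s ≥ 0`, a sign `σ = ±1`, and `M` large enough depending on `s`, the kernel `K¹_ξ`
satisfies the Schur bounds `∫ K¹_ξ dη ≤ C` and `∫∫ K¹_ξ dθ dλ ≤ C` uniformly in `ξ ≠ 0`;
consequently the associated integral operator is bounded on `L²` uniformly in `ξ`. -/
theorem stmt11 (s σ : ℝ) (hs : 0 ≤ s) (hσ : σ = 1 ∨ σ = -1) :
    ∃ M₀ : ℝ, ∀ M : ℝ, M₀ ≤ M → ∃ C > (0:ℝ), ∀ ξ : ℝ, ξ ≠ 0 →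
      (∀ θ lam : ℝ,
        ∫⁻ η : ℝ, ENNReal.ofReal (K1ker s M σ ξ η θ lam) ≤ ENNReal.ofReal C) ∧
      (∀ η : ℝ,
        ∫⁻ θ : ℝ, ∫⁻ lam : ℝ, ENNReal.ofReal (K1ker s M σ ξ η θ lam) ≤
          ENNReal.ofReal C) ∧
      (∀ f : ℝ × ℝ → ℝ, MemLp f 2 volume →
        eLpNorm (fun η : ℝ => ∫ p : ℝ × ℝ, K1ker s M σ ξ η p.1 p.2 * f p) 2 volume ≤
          ENNReal.ofReal C * eLpNorm f 2 volume) := by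
  refine ⟨s / 2 + 2, fun M hM => ⟨√2 ^ (s / 2) * 32, by positivity, fun ξ hξ => ?_⟩⟩
  have hrow : ∀ θ lam, ∫⁻ η, ENNReal.ofReal (K1ker s M σ ξ η θ lam) ≤
      ENNReal.ofReal (√2 ^ (s / 2) * 32) := fun θ lam =>
    (lintegral_K1ker_le hs hσ hξ hM θ lam).trans (ENNReal.ofReal_le_ofReal (by gcongr; norm_num))
  have hcol := lintegral_lintegral_K1ker_le hs hσ hξ hM
  have hcol' : ∀ η, ∫⁻ p : ℝ × ℝ, ENNReal.ofReal (K1ker s M σ ξ η p.1 p.2) ≤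
      ENNReal.ofReal (√2 ^ (s / 2) * 32) := fun η => by
    rw [Measure.volume_eq_prod,
      lintegral_prod (fun p => ENNReal.ofReal (K1ker s M σ ξ η p.1 p.2))
      ((measurable_K1ker s M σ ξ).ennreal_ofReal.comp measurable_prodMk_left).aemeasurable]
    exact hcol η
  exact ⟨hrow, hcol, fun f hf =>
    eLpNorm_integral_mul_le (μ := (volume : Measure ℝ)) (ν := (volume : Measure (ℝ × ℝ)))
      (k := fun η p => K1ker s M σ ξ η p.1 p.2) (measurable_K1ker s M σ ξ)
      (fun η p => K1ker_nonneg s M σ ξ η p.1 p.2) hcol' (fun p => hrow p.1 p.2) hf.1⟩
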